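/- arXiv:2103.04500 — 8 statements merged into one kernel-verified Lean document; each statement's English description precedes it below -/
import Mathlib

section
/- Let N ≥ 4 be an integer and m > 1. For every σ with σ_c ≤ σ ≤ 2(N−3), where σ_c = 2(N−1)(m−1)/(3m+1), there exists no good profile with interface for the profile ODE. -/
open Set

/-- One-sided derivative (on `[0,∞)`) of the `m`-th power of the profile. -/
noncomputable def Dm (m : ℝ) (f : ℝ → ℝ) : ℝ → ℝ :=
  derivWithin (fun ξ => f ξ ^ m) (Ici 0)

/-- Second one-sided derivative (on `[0,∞)`) of the `m`-th power of the profile. -/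
noncomputable def D2m (m : ℝ) (f : ℝ → ℝ) : ℝ → ℝ :=
  derivWithin (Dm m f) (Ici 0)

/-- A good profile for the ODE
`(f^m)'' + ((N-1)/ξ)(f^m)' - f/(m-1) + ξ^σ f^m = 0`:
a continuous nonnegative function on `[0,∞)` whose `m`-th power is twice
differentiable, solving the ODE wherever `f > 0`, and satisfying one of the
initial behaviors (P1), (P2), (P3). -/
structure GoodProfile (m σ N : ℝ) (f : ℝ → ℝ) : Prop where
  cont : ContinuousOn f (Ici 0)
  nonneg : ∀ ξ, 0 ≤ ξ → 0 ≤ f ξ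
  diff1 : ∀ ξ, 0 ≤ ξ → DifferentiableWithinAt ℝ (fun ξ => f ξ ^ m) (Ici 0) ξ
  diff2 : ∀ ξ, 0 ≤ ξ → DifferentiableWithinAt ℝ (Dm m f) (Ici 0) ξ
  ode : ∀ ξ, 0 < ξ → 0 < f ξ →
    D2m m f ξ + ((N - 1) / ξ) * Dm m f ξ - f ξ / (m - 1) + ξ ^ σ * f ξ ^ m = 0
  init : (0 < f 0 ∧ HasDerivWithinAt f 0 (Ici 0) 0)
    ∨ (f 0 = 0 ∧ Dm m f 0 = 0)
    ∨ (∃ ξ0 > (0:ℝ), f ξ0 = 0 ∧ Dm m f ξ0 = 0 ∧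
        ∃ ε > (0:ℝ), ∀ ξ ∈ Ioo ξ0 (ξ0 + ε), 0 < f ξ)

/-- A good profile has an interface at `η ∈ (0,∞)` if `f(η) = 0`, `(f^m)'(η) = 0`
and `f > 0` on a left-neighborhood of `η`. -/
def HasInterfaceAt (m : ℝ) (f : ℝ → ℝ) (η : ℝ) : Prop :=
  0 < η ∧ f η = 0 ∧ Dm m f η = 0 ∧ ∃ ε > (0:ℝ), ∀ ξ ∈ Ioo (η - ε) η, 0 < f ξ

/-!
With `g = f^m`, `w = g'` and `A = N - 1 - σ/2`, consider the Pohozaev-type energy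
`E = x^A (w²/2 - m/(m²-1) f^(m+1) + x^σ g²/2) + (A+σ)/2 x^(A-1) g w + (A+σ)(N-A)/4 x^(A-2) g²`.
The weights are chosen so that along a solution every term of `E'` containing `w` cancels, leaving
`E' = (3m+1)(σ - σ_c)/(4(m²-1)) x^(A-1) f^(m+1) + (A+σ)(N-A)(A-2)/4 x^(A-3) f^(2m)`.
For `σ_c ≤ σ ≤ 2(N-3)` both coefficients are nonnegative and one is positive (`A > 2` when
`σ = σ_c`, as `N ≥ 4`), and `w = 0` wherever `f = 0` because `f^m` is minimal there. Hence `E` is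
nondecreasing on `[0, ∞)` and strictly increasing where `f > 0`. At an interface `η` we get
`E(η) = 0`, whereas `E(0) ≥ 0`, and strict increase just left of `η` makes `E(0) < E(η)`.
-/

namespace Pohozaev

noncomputable section

variable (m σ N : ℝ)

def A : ℝ := N - 1 - σ / 2

-- `f^(m+1)` appears as `g^((m+1)/m)`: only `g = f^m` is known to be differentiable.
def energy (g w : ℝ → ℝ) (x : ℝ) : ℝ :=
  x ^ A σ N * w x ^ 2 / 2 - m / ((m + 1) * (m - 1)) * x ^ A σ N * g x ^ ((m + 1) / m)
    + x ^ (A σ N + σ) * g x ^ 2 / 2 + (A σ N + σ) / 2 * x ^ (A σ N - 1) * g x * w x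
    + (A σ N + σ) * (N - A σ N) / 4 * x ^ (A σ N - 2) * g x ^ 2

def energyDeriv (x G W W' : ℝ) : ℝ :=
  A σ N * x ^ (A σ N - 1) * W ^ 2 / 2 + x ^ A σ N * W * W'
    - m / ((m + 1) * (m - 1)) * (A σ N * x ^ (A σ N - 1) * G ^ ((m + 1) / m)
      + x ^ A σ N * ((m + 1) / m) * G ^ ((m + 1) / m - 1) * W)
    + (A σ N + σ) * x ^ (A σ N + σ - 1) * G ^ 2 / 2 + x ^ (A σ N + σ) * G * W
    + (A σ N + σ) / 2 * ((A σ N - 1) * x ^ (A σ N - 2) * G * W + x ^ (A σ N - 1) * W ^ 2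
      + x ^ (A σ N - 1) * G * W')
    + (A σ N + σ) * (N - A σ N) / 4 * ((A σ N - 2) * x ^ (A σ N - 3) * G ^ 2
      + 2 * x ^ (A σ N - 2) * G * W)

variable {m σ N}

theorem hasDerivAt_energy {g w : ℝ → ℝ} {x w' : ℝ} (hm : 0 < m) (hx : 0 < x)
    (hg : HasDerivAt g (w x) x) (hw : HasDerivAt w w' x) :
    HasDerivAt (energy m σ N g w) (energyDeriv m σ N x (g x) (w x) w') x := by
  have hp : 1 ≤ (m + 1) / m := by rw [le_div_iff₀ hm]; linarith
  have hpow : ∀ a : ℝ, HasDerivAt (fun y : ℝ => y ^ a) (a * x ^ (a - 1)) x :=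
    fun a => Real.hasDerivAt_rpow_const (Or.inl hx.ne')
  have h := ((((((hpow (A σ N)).mul (hw.pow 2)).div_const 2).sub
    (((hpow (A σ N)).mul (hg.rpow_const (Or.inr hp))).const_mul (m / ((m + 1) * (m - 1))))).add
    (((hpow (A σ N + σ)).mul (hg.pow 2)).div_const 2)).add
    ((((hpow (A σ N - 1)).mul hg).mul hw).const_mul ((A σ N + σ) / 2))).add
    (((hpow (A σ N - 2)).mul (hg.pow 2)).const_mul ((A σ N + σ) * (N - A σ N) / 4))
  refine (h.congr_deriv ?_).congr_of_eventuallyEq (Filter.Eventually.of_forall fun y => ?_)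
  · simp only [energyDeriv, Pi.mul_apply, Pi.pow_apply, show A σ N - 1 - 1 = A σ N - 2 by ring,
      show A σ N - 2 - 1 = A σ N - 3 by ring]
    push_cast
    ring
  · simp only [energy, Pi.add_apply, Pi.sub_apply, Pi.mul_apply, Pi.pow_apply]
    ring

theorem energyDeriv_zero_zero (hm : 0 < m) (x W' : ℝ) : energyDeriv m σ N x 0 0 W' = 0 := by
  have hp : (m + 1) / m ≠ 0 := by positivity
  simp [energyDeriv, Real.zero_rpow hp]

theorem energyDeriv_eq_of_ode (hm : 1 < m) {x F W W' : ℝ} (hx : 0 < x) (hF : 0 < F)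
    (hode : W' + (N - 1) / x * W - F / (m - 1) + x ^ σ * F ^ m = 0) :
    energyDeriv m σ N x (F ^ m) W W' =
      (σ * (m + 1) - A σ N * (m - 1)) / (2 * (m + 1) * (m - 1)) * x ^ (A σ N - 1) * F ^ (m + 1)
        + (A σ N + σ) * (N - A σ N) * (A σ N - 2) / 4 * x ^ (A σ N - 3) * (F ^ m) ^ 2 := by
  have hm0 : m ≠ 0 := by positivity
  have hx3 : ∀ a : ℝ, ∀ k : ℕ, a = A σ N - 3 + k → x ^ a = x ^ (A σ N - 3) * x ^ k := by
    rintro a k rfl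
    exact Real.rpow_add_natCast hx.ne' _ k
  have hxσ : ∀ a : ℝ, x ^ (a + σ) = x ^ a * x ^ σ := fun a => Real.rpow_add hx a σ
  have hFpow : ∀ a : ℝ, m * a = 1 → (F ^ m) ^ a = F := by
    intro a ha
    rw [← Real.rpow_mul hF.le, ha, Real.rpow_one]
  have hG : (F ^ m) ^ ((m + 1) / m) = F ^ m * F := by
    rw [← Real.rpow_mul hF.le, mul_div_cancel₀ _ hm0, Real.rpow_add_one hF.ne']
  have hW' : W' = F / (m - 1) - (N - 1) / x * W - x ^ σ * F ^ m := by linear_combination hode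
  rw [energyDeriv, hG, hFpow _ (by field_simp; ring), Real.rpow_add_one hF.ne',
    show A σ N + σ - 1 = A σ N - 1 + σ by ring, hxσ, hxσ,
    hx3 (A σ N) 3 (by push_cast; ring), hx3 (A σ N - 1) 2 (by push_cast; ring),
    hx3 (A σ N - 2) 1 (by push_cast; ring), hW']
  simp only [A]
  field_simp
  ring

structure Admissible (m σ N : ℝ) : Prop where
  four_le : 4 ≤ N
  one_lt : 1 < m
  crit_le : 2 * (N - 1) * (m - 1) / (3 * m + 1) ≤ σ
  le_two_mul : σ ≤ 2 * (N - 3)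

theorem two_mul_coeff_eq :
    2 * (σ * (m + 1) - A σ N * (m - 1)) = σ * (3 * m + 1) - 2 * (N - 1) * (m - 1) := by
  simp only [A]; ring

namespace Admissible

theorem m_pos (hp : Admissible m σ N) : 0 < m := by linarith [hp.one_lt]

theorem crit_le_mul (hp : Admissible m σ N) : 2 * (N - 1) * (m - 1) ≤ σ * (3 * m + 1) :=
  (div_le_iff₀ (by linarith [hp.one_lt])).mp hp.crit_le

theorem sigma_nonneg (hp : Admissible m σ N) : 0 ≤ σ := by
  have := mul_nonneg (by linarith [hp.four_le] : 0 ≤ N - 1) (by linarith [hp.one_lt] : 0 ≤ m - 1)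
  nlinarith [hp.crit_le_mul, hp.one_lt]

theorem two_le_A (hp : Admissible m σ N) : 2 ≤ A σ N := by
  simp only [A]; linarith [hp.le_two_mul]

theorem coeff_nonneg (hp : Admissible m σ N) : 0 ≤ σ * (m + 1) - A σ N * (m - 1) := by
  linarith [two_mul_coeff_eq (m := m) (σ := σ) (N := N), hp.crit_le_mul]

theorem coeff_pos_or_two_lt_A (hp : Admissible m σ N) :
    0 < σ * (m + 1) - A σ N * (m - 1) ∨ 2 < A σ N := by
  rcases hp.crit_le_mul.lt_or_eq with hlt | hcrit
  · left; linarith [two_mul_coeff_eq (m := m) (σ := σ) (N := N)]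
  · right
    simp only [A]
    nlinarith [hp.four_le, hp.one_lt]

end Admissible

theorem energyDeriv_pos_of_ode (hp : Admissible m σ N) {x F W W' : ℝ} (hx : 0 < x) (hF : 0 < F)
    (hode : W' + (N - 1) / x * W - F / (m - 1) + x ^ σ * F ^ m = 0) :
    0 < energyDeriv m σ N x (F ^ m) W W' := by
  have hσ := hp.sigma_nonneg
  have hA := hp.two_le_A
  have hK := hp.coeff_nonneg
  have hNA : 0 < N - A σ N := by simp only [A]; linarith
  have hm := hp.one_lt
  have hm1 : 0 < m - 1 := by linarith
  rw [energyDeriv_eq_of_ode hm hx hF hode]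
  rcases hp.coeff_pos_or_two_lt_A with hK_pos | hA_gt
  · have := sub_nonneg.mpr hA
    exact add_pos_of_pos_of_nonneg (by positivity) (by positivity)
  · have := sub_pos.mpr hA_gt
    exact add_pos_of_nonneg_of_pos (by positivity) (by positivity)

theorem energy_zero_nonneg (hσ : 0 ≤ σ) (hA : 2 ≤ A σ N) (g w : ℝ → ℝ) :
    0 ≤ energy m σ N g w 0 := by
  have hNA : 0 ≤ N - A σ N := by simp only [A]; linarith
  simp only [energy, Real.zero_rpow (show A σ N ≠ 0 by linarith),
    Real.zero_rpow (show A σ N + σ ≠ 0 by linarith), Real.zero_rpow (show A σ N - 1 ≠ 0 by linarith)]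
  have : 0 ≤ (0 : ℝ) ^ (A σ N - 2) := Real.rpow_nonneg le_rfl _
  simp only [zero_mul, zero_div, sub_zero, add_zero, mul_zero, zero_add]
  positivity

theorem energy_eq_zero (hm : 0 < m) {g w : ℝ → ℝ} {x : ℝ} (hg : g x = 0) (hw : w x = 0) :
    energy m σ N g w x = 0 := by
  have hp : (m + 1) / m ≠ 0 := by positivity
  simp [energy, hg, hw, Real.zero_rpow hp]

theorem continuousOn_energy (hm : 0 < m) (hσ : 0 ≤ σ) (hA : 2 ≤ A σ N) {g w : ℝ → ℝ}
    (hg : ContinuousOn g (Ici 0)) (hw : ContinuousOn w (Ici 0)) :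
    ContinuousOn (energy m σ N g w) (Ici 0) := by
  have hpow : ∀ a : ℝ, 0 ≤ a → ContinuousOn (fun x : ℝ => x ^ a) (Ici 0) :=
    fun a ha => (Real.continuous_rpow_const ha).continuousOn
  have hgp : ContinuousOn (fun x => g x ^ ((m + 1) / m)) (Ici 0) :=
    hg.rpow_const fun _ _ => Or.inr (by positivity)
  unfold energy
  have := hpow (A σ N) (by linarith)
  have := hpow (A σ N + σ) (by linarith)
  have := hpow (A σ N - 1) (by linarith)
  have := hpow (A σ N - 2) (by linarith)
  fun_prop

end

end Pohozaev

namespace GoodProfile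

open Pohozaev

variable {m σ N : ℝ} {f : ℝ → ℝ}

theorem hasDerivAt_rpow (hf : GoodProfile m σ N f) {x : ℝ} (hx : 0 < x) :
    HasDerivAt (fun ξ => f ξ ^ m) (Dm m f x) x :=
  (hf.diff1 x hx.le).hasDerivWithinAt.hasDerivAt (Ici_mem_nhds hx)

theorem hasDerivAt_Dm (hf : GoodProfile m σ N f) {x : ℝ} (hx : 0 < x) :
    HasDerivAt (Dm m f) (D2m m f x) x :=
  (hf.diff2 x hx.le).hasDerivWithinAt.hasDerivAt (Ici_mem_nhds hx)

theorem Dm_eq_zero (hf : GoodProfile m σ N f) (hm : 0 < m) {x : ℝ} (hx : 0 < x)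
    (hfx : f x = 0) : Dm m f x = 0 := by
  have hmin : IsLocalMin (fun ξ => f ξ ^ m) x := by
    filter_upwards [Ici_mem_nhds hx] with y hy
    rw [hfx, Real.zero_rpow hm.ne']
    exact Real.rpow_nonneg (hf.nonneg y hy) m
  exact hmin.hasDerivAt_eq_zero (hf.hasDerivAt_rpow hx)

theorem hasDerivAt_energy (hf : GoodProfile m σ N f) (hm : 0 < m) {x : ℝ} (hx : 0 < x) :
    HasDerivAt (energy m σ N (fun ξ => f ξ ^ m) (Dm m f))
      (energyDeriv m σ N x (f x ^ m) (Dm m f x) (D2m m f x)) x :=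
  Pohozaev.hasDerivAt_energy hm hx (hf.hasDerivAt_rpow hx) (hf.hasDerivAt_Dm hx)

theorem continuousOn_energy (hf : GoodProfile m σ N f) (hm : 0 < m) (hσ : 0 ≤ σ)
    (hA : 2 ≤ A σ N) : ContinuousOn (energy m σ N (fun ξ => f ξ ^ m) (Dm m f)) (Ici 0) :=
  Pohozaev.continuousOn_energy hm hσ hA (fun x hx => (hf.diff1 x hx).continuousWithinAt)
    (fun x hx => (hf.diff2 x hx).continuousWithinAt)

theorem energyDeriv_nonneg (hf : GoodProfile m σ N f) (hp : Admissible m σ N) {x : ℝ}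
    (hx : 0 < x) : 0 ≤ energyDeriv m σ N x (f x ^ m) (Dm m f x) (D2m m f x) := by
  rcases (hf.nonneg x hx.le).lt_or_eq with hfx | hfx
  · exact (energyDeriv_pos_of_ode hp hx hfx (hf.ode x hx hfx)).le
  · rw [hf.Dm_eq_zero hp.m_pos hx hfx.symm, ← hfx, Real.zero_rpow hp.m_pos.ne',
      energyDeriv_zero_zero hp.m_pos]

theorem monotoneOn_energy (hf : GoodProfile m σ N f) (hp : Admissible m σ N) :
    MonotoneOn (energy m σ N (fun ξ => f ξ ^ m) (Dm m f)) (Ici 0) := by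
  refine monotoneOn_of_deriv_nonneg (convex_Ici 0)
    (hf.continuousOn_energy hp.m_pos hp.sigma_nonneg hp.two_le_A)
    (fun x hx => ?_) (fun x hx => ?_) <;> rw [interior_Ici] at hx
  · exact (hf.hasDerivAt_energy hp.m_pos hx).differentiableAt.differentiableWithinAt
  · rw [(hf.hasDerivAt_energy hp.m_pos hx).deriv]
    exact hf.energyDeriv_nonneg hp hx

theorem strictMonoOn_energy (hf : GoodProfile m σ N f) (hp : Admissible m σ N) {a b : ℝ}
    (ha : 0 ≤ a) (hpos : ∀ x ∈ Ioo a b, 0 < f x) :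
    StrictMonoOn (energy m σ N (fun ξ => f ξ ^ m) (Dm m f)) (Icc a b) := by
  refine strictMonoOn_of_deriv_pos (convex_Icc a b)
    ((hf.continuousOn_energy hp.m_pos hp.sigma_nonneg hp.two_le_A).mono
      fun x hx => le_trans ha hx.1) (fun x hx => ?_)
  rw [interior_Icc] at hx
  have hx0 : 0 < x := lt_of_le_of_lt ha hx.1
  rw [(hf.hasDerivAt_energy hp.m_pos hx0).deriv]
  exact energyDeriv_pos_of_ode hp hx0 (hpos x hx) (hf.ode x hx0 (hpos x hx))

end GoodProfile

open Pohozaev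

/-- Theorem 1.2, non-existence part: for `N ≥ 4`, `m > 1` and
`σ_c ≤ σ ≤ 2(N-3)`, where `σ_c = 2(N-1)(m-1)/(3m+1)`, there is no good profile
with interface. -/
theorem no_goodProfile_with_interface_of_sigma_c_le
    (N : ℕ) (hN : 4 ≤ N) (m : ℝ) (hm : 1 < m) (σ : ℝ)
    (hσc : 2 * ((N : ℝ) - 1) * (m - 1) / (3 * m + 1) ≤ σ)
    (hσ2 : σ ≤ 2 * ((N : ℝ) - 3)) :
    ¬ ∃ f η, GoodProfile m σ (N : ℝ) f ∧ HasInterfaceAt m f η := by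
  rintro ⟨f, η, hf, hη, hfη, hDmη, ε, hε, hpos⟩
  have hp : Admissible m σ N := ⟨by exact_mod_cast hN, hm, hσc, hσ2⟩
  set E := energy m σ N (fun ξ => f ξ ^ m) (Dm m f)
  set a := max (η - ε) 0
  have ha : a < η := max_lt (by linarith) hη
  have h0a : E 0 ≤ E a :=
    hf.monotoneOn_energy hp self_mem_Ici (mem_Ici.mpr (le_max_right _ _)) (le_max_right _ _)
  have haη : E a < E η :=
    hf.strictMonoOn_energy hp (le_max_right _ _)
      (fun x hx => hpos x ⟨lt_of_le_of_lt (le_max_left _ _) hx.1, hx.2⟩)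
      (left_mem_Icc.mpr ha.le) (right_mem_Icc.mpr ha.le) ha
  have hEη : E η = 0 :=
    energy_eq_zero hp.m_pos (by simp only [hfη, Real.zero_rpow hp.m_pos.ne']) hDmη
  have hE0 : 0 ≤ E 0 := energy_zero_nonneg hp.sigma_nonneg hp.two_le_A _ _
  linarith
end

section
/- Let m > 1, N* = (4m+2)/(m+1) and σ* = 2(m−1)/(m+1). Suppose f : I → (0,∞) is a positive function on an open interval I ⊂ (0,∞) such that ξ ↦ f(ξ)^m is twice differentiable on I and f satisfies the profile ODE with parameters N = N* and σ = σ*, i.e. (f^m)''(ξ) + ((N*−1)/ξ)(f^m)'(ξ) − f(ξ)/(m−1) + ξ^{σ*} f(ξ)^m = 0 on I. Define, for η in the interval J obtained from I via ξ = ((2m/(m+1)) η)^{(m+1)/(2m)}, the function F(η) := ((2m/(m+1)) η)^{1/m} · f(((2m/(m+1)) η)^{(m+1)/(2m)}). Then F satisfies the one-dimensional homogeneous profile ODE (F^m)''(η) − F(η)/(m−1) + F(η)^m = 0 on J. -/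
/-!
Write `g = f ^ m`, `x = cη` and `ξ = x ^ α` with `c = 2m/(m+1)` and `α = 1/c`. Then
`F ^ m = x · g(ξ)`, and since `dξ/dη = x ^ (α - 1)` the chain rule gives
`(F ^ m)'' = x ^ (α - 1) · (ξ g''(ξ) + (c + 1) g'(ξ))`. As `c + 1 = N* - 1`, this is
`x ^ (α - 1) ξ` times the radial part of the profile ODE, and the exponent identities
`x ^ (α - 1) ξ = x ^ (1/m)` and `x ^ (α - 1) ξ ξ ^ σ* = x` turn the remaining terms into
`F / (m - 1) - F ^ m`.
-/

open Set Filter Topology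

section ScaledPowerSubstitution

variable {g : ℝ → ℝ} {c α η : ℝ}

theorem hasDerivAt_rpow_const_mul (hcα : c * α = 1) (hη : 0 < c * η) :
    HasDerivAt (fun t => (c * t) ^ α) ((c * η) ^ (α - 1)) η := by
  have h := ((hasDerivAt_id η).const_mul c).rpow_const (p := α) (Or.inl hη.ne')
  simp only [id, mul_one] at h
  rwa [hcα, one_mul] at h

theorem hasDerivAt_mul_comp_rpow (hcα : c * α = 1) (hη : 0 < c * η)
    (hg : DifferentiableAt ℝ g ((c * η) ^ α)) :
    HasDerivAt (fun t => c * t * g ((c * t) ^ α))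
      (c * g ((c * η) ^ α) + (c * η) ^ α * deriv g ((c * η) ^ α)) η := by
  have h : HasDerivAt (fun t => c * t * g ((c * t) ^ α))
      (c * 1 * g ((c * η) ^ α) + c * η * (deriv g ((c * η) ^ α) * (c * η) ^ (α - 1))) η :=
    ((hasDerivAt_id' η).const_mul c).mul (hg.hasDerivAt.comp η (hasDerivAt_rpow_const_mul hcα hη))
  have hpow : c * η * (c * η) ^ (α - 1) = (c * η) ^ α := by
    rw [Real.rpow_sub_one hη.ne', mul_div_cancel₀ _ hη.ne']
  convert h using 1
  linear_combination -deriv g ((c * η) ^ α) * hpow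

theorem deriv_deriv_mul_comp_rpow (hcα : c * α = 1) (hη : 0 < c * η)
    (hg : ∀ᶠ ξ in 𝓝 ((c * η) ^ α), DifferentiableAt ℝ g ξ)
    (hg' : DifferentiableAt ℝ (deriv g) ((c * η) ^ α)) :
    deriv (deriv fun t => c * t * g ((c * t) ^ α)) η =
      (c * η) ^ (α - 1) *
        ((c * η) ^ α * deriv (deriv g) ((c * η) ^ α) + (c + 1) * deriv g ((c * η) ^ α)) := by
  have hcont : ContinuousAt (fun t => c * t) η := (continuous_const_mul c).continuousAt
  have hξ : ContinuousAt (fun t => (c * t) ^ α) η := hcont.rpow_const (Or.inl hη.ne')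
  have hderiv : deriv (fun t => c * t * g ((c * t) ^ α)) =ᶠ[𝓝 η]
      fun t => c * g ((c * t) ^ α) + (c * t) ^ α * deriv g ((c * t) ^ α) := by
    filter_upwards [hcont.eventually_mem (Ioi_mem_nhds hη), hξ.eventually hg] with t ht hgt
    exact (hasDerivAt_mul_comp_rpow hcα ht hgt).deriv
  have hξ' := hasDerivAt_rpow_const_mul hcα hη
  have h : HasDerivAt (fun t => c * g ((c * t) ^ α) + (c * t) ^ α * deriv g ((c * t) ^ α))
      (c * (deriv g ((c * η) ^ α) * (c * η) ^ (α - 1)) + ((c * η) ^ (α - 1) *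
        deriv g ((c * η) ^ α) + (c * η) ^ α * (deriv (deriv g) ((c * η) ^ α) * (c * η) ^ (α - 1))))
      η :=
    ((hg.self_of_nhds.hasDerivAt.comp η hξ').const_mul c).add
      (hξ'.mul (hg'.hasDerivAt.comp (h₂ := deriv g) η hξ'))
  rw [hderiv.deriv_eq, h.deriv]
  ring

end ScaledPowerSubstitution

theorem rpow_one_div_mul_rpow {x y m : ℝ} (hx : 0 ≤ x) (hy : 0 ≤ y) (hm : m ≠ 0) :
    (x ^ (1 / m) * y) ^ m = x * y ^ m := by
  rw [Real.mul_rpow (Real.rpow_nonneg hx _) hy, ← Real.rpow_mul hx, one_div_mul_cancel hm,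
    Real.rpow_one]

theorem profile_rescaling_identity {m x u g' g'' : ℝ} (hm : 1 < m) (hx : 0 < x)
    (hode : g'' + (((4 * m + 2) / (m + 1) - 1) / x ^ ((m + 1) / (2 * m))) * g' - u / (m - 1)
      + (x ^ ((m + 1) / (2 * m))) ^ (2 * (m - 1) / (m + 1)) * u ^ m = 0) :
    x ^ ((m + 1) / (2 * m) - 1) * (x ^ ((m + 1) / (2 * m)) * g'' + (2 * m / (m + 1) + 1) * g')
      - x ^ (1 / m) * u / (m - 1) + x * u ^ m = 0 := by
  have hm0 : m ≠ 0 := by positivity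
  have hm1 : m + 1 ≠ 0 := by positivity
  have hξ : x ^ ((m + 1) / (2 * m)) ≠ 0 := (Real.rpow_pos_of_pos hx _).ne'
  have hexp₁ : x ^ ((m + 1) / (2 * m) - 1) * x ^ ((m + 1) / (2 * m)) = x ^ (1 / m) := by
    rw [← Real.rpow_add hx]
    congr 1
    field_simp
    ring
  have hexp₂ : x ^ ((m + 1) / (2 * m) - 1) * x ^ ((m + 1) / (2 * m)) *
      (x ^ ((m + 1) / (2 * m))) ^ (2 * (m - 1) / (m + 1)) = x := by
    rw [← Real.rpow_mul hx.le, ← Real.rpow_add hx, ← Real.rpow_add hx]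
    convert Real.rpow_one x using 2
    field_simp
    ring
  have hK : (4 * m + 2) / (m + 1) - 1 = 2 * m / (m + 1) + 1 := by
    field_simp
    ring
  rw [hK] at hode
  linear_combination x ^ ((m + 1) / (2 * m) - 1) * x ^ ((m + 1) / (2 * m)) * hode
    + u / (m - 1) * hexp₁ - u ^ m * hexp₂
    - x ^ ((m + 1) / (2 * m) - 1) * (2 * m / (m + 1) + 1) * g' * mul_inv_cancel₀ hξ

theorem transform_to_one_dimensional_homogeneous_general
    (m : ℝ) (hm : 1 < m) (a b : ℝ)
    (f : ℝ → ℝ) (hf : ∀ ξ ∈ Ioo a b, 0 < f ξ)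
    (hd1 : ∀ ξ ∈ Ioo a b, DifferentiableAt ℝ (fun t => f t ^ m) ξ)
    (hd2 : ∀ ξ ∈ Ioo a b, DifferentiableAt ℝ (deriv fun t => f t ^ m) ξ)
    (hode : ∀ ξ ∈ Ioo a b,
      deriv (deriv fun t => f t ^ m) ξ
        + (((4 * m + 2) / (m + 1) - 1) / ξ) * deriv (fun t => f t ^ m) ξ
        - f ξ / (m - 1) + ξ ^ (2 * (m - 1) / (m + 1)) * f ξ ^ m = 0)
    (F : ℝ → ℝ)
    (hF : ∀ η : ℝ, F η =
      ((2 * m / (m + 1)) * η) ^ (1 / m) * f (((2 * m / (m + 1)) * η) ^ ((m + 1) / (2 * m)))) :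
    ∀ η : ℝ, 0 < η → ((2 * m / (m + 1)) * η) ^ ((m + 1) / (2 * m)) ∈ Ioo a b →
      deriv (deriv fun t => F t ^ m) η - F η / (m - 1) + F η ^ m = 0 := by
  intro η hη hξ
  have hm0 : m ≠ 0 := by positivity
  have hcα : 2 * m / (m + 1) * ((m + 1) / (2 * m)) = 1 := by
    field_simp [show m + 1 ≠ 0 by positivity]
  have hx : 0 < 2 * m / (m + 1) * η := by positivity
  have hcont : ContinuousAt (fun t => (2 * m / (m + 1) * t) ^ ((m + 1) / (2 * m))) η :=
    (continuous_const_mul _).continuousAt.rpow_const (Or.inl hx.ne')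
  have hFm : (fun t => F t ^ m) =ᶠ[𝓝 η]
      fun t => 2 * m / (m + 1) * t * f ((2 * m / (m + 1) * t) ^ ((m + 1) / (2 * m))) ^ m := by
    filter_upwards [Ioi_mem_nhds hη, hcont.eventually_mem (isOpen_Ioo.mem_nhds hξ)] with t ht hξt
    rw [hF, rpow_one_div_mul_rpow (mul_pos (by positivity) ht).le (hf _ hξt).le hm0]
  rw [hFm.deriv.deriv_eq, deriv_deriv_mul_comp_rpow hcα hx
    (eventually_of_mem (isOpen_Ioo.mem_nhds hξ) hd1) (hd2 _ hξ), hF,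
    rpow_one_div_mul_rpow hx.le (hf _ hξ).le hm0]
  exact profile_rescaling_identity hm hx (hode _ hξ)

/-- the transformation
`ξ = ((2m/(m+1))η)^{(m+1)/(2m)}`, `F(η) = ((2m/(m+1))η)^{1/m} f(ξ(η))`
maps positive solutions of the profile ODE with parameters `N* = (4m+2)/(m+1)`
and `σ* = 2(m-1)/(m+1)` to solutions of the one-dimensional homogeneous profile
ODE `(F^m)'' - F/(m-1) + F^m = 0`. -/
theorem transform_to_one_dimensional_homogeneous
    (m : ℝ) (hm : 1 < m) (a b : ℝ) (hI : Ioo a b ⊆ Ioi (0:ℝ))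
    (f : ℝ → ℝ) (hf : ∀ ξ ∈ Ioo a b, 0 < f ξ)
    (hd1 : ∀ ξ ∈ Ioo a b, DifferentiableAt ℝ (fun t => f t ^ m) ξ)
    (hd2 : ∀ ξ ∈ Ioo a b, DifferentiableAt ℝ (deriv fun t => f t ^ m) ξ)
    (hode : ∀ ξ ∈ Ioo a b,
      deriv (deriv fun t => f t ^ m) ξ
        + (((4 * m + 2) / (m + 1) - 1) / ξ) * deriv (fun t => f t ^ m) ξ
        - f ξ / (m - 1) + ξ ^ (2 * (m - 1) / (m + 1)) * f ξ ^ m = 0)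
    (F : ℝ → ℝ)
    (hF : ∀ η : ℝ, F η =
      ((2 * m / (m + 1)) * η) ^ (1 / m) * f (((2 * m / (m + 1)) * η) ^ ((m + 1) / (2 * m)))) :
    ∀ η : ℝ, 0 < η → ((2 * m / (m + 1)) * η) ^ ((m + 1) / (2 * m)) ∈ Ioo a b →
      deriv (deriv fun t => F t ^ m) η - F η / (m - 1) + F η ^ m = 0 :=
  transform_to_one_dimensional_homogeneous_general m hm a b f hf hd1 hd2 hode F hF
end

section
/- Let m > 1, σ ≥ 0, N ≥ 1, and let f : I → (0,∞) be a positive function on an open interval I ⊂ (0,∞) such that ξ ↦ f(ξ)^m is twice differentiable on I and f satisfies the profile ODE on I. Define X(ξ) = √(m(m−1)) ξ^{−1} f(ξ)^{(m−1)/2}, Y(ξ) = (2√(m(m−1))/(m−1)) · (d/dξ)(f(ξ)^{(m−1)/2}), Z(ξ) = (m−1) ξ^σ f(ξ)^{m−1}, and ρ(ξ) = f(ξ)^{−(m−1)/2}/√(m(m−1)). Then for every ξ ∈ I: X'(ξ) = ρ(ξ)·[((m−1)/2) X(ξ)Y(ξ) − X(ξ)²], Y'(ξ) = ρ(ξ)·[−((m+1)/2)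 Y(ξ)² + 1 − Z(ξ) − (N−1) X(ξ)Y(ξ)], and Z'(ξ) = ρ(ξ)·Z(ξ)·[(m−1) Y(ξ) + σ X(ξ)]. -/
/-!
Since `f > 0`, every power `f ^ α` is locally `(f ^ m) ^ (α / m)`, hence differentiable with
`(f ^ α)' = (α / m) f ^ (α - m) (f ^ m)'`. The equations for `X` and `Z` are then the product
rule (with `f ^ (m - 1) = (f ^ ((m - 1) / 2)) ^ 2`), while
`Y = (√(m(m-1)) / m) f ^ ((m - 1) / 2 - m) (f ^ m)'` is differentiated once more and `(f ^ m)''`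
is eliminated with the profile ODE.
-/

open Set Filter Topology

theorem hasDerivAt_rpow_of_hasDerivAt_rpow {f : ℝ → ℝ} {x m g' : ℝ}
    (hf : ∀ᶠ t in 𝓝 x, 0 < f t) (hm : m ≠ 0) (hg : HasDerivAt (fun t => f t ^ m) g' x)
    (α : ℝ) :
    HasDerivAt (fun t => f t ^ α) (α / m * f x ^ (α - m) * g') x := by
  have hfx : 0 < f x := hf.self_of_nhds
  have h := hg.rpow_const (p := α / m) (Or.inl (Real.rpow_pos_of_pos hfx m).ne')
  rw [← Real.rpow_mul hfx.le, mul_sub, mul_div_cancel₀ α hm, mul_one] at h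
  refine (h.congr_of_eventuallyEq ?_).congr_deriv (by ring)
  filter_upwards [hf] with t ht
  rw [← Real.rpow_mul ht.le, mul_div_cancel₀ α hm]

noncomputable def phaseX (m : ℝ) (f : ℝ → ℝ) (ξ : ℝ) : ℝ :=
  √(m * (m - 1)) * ξ⁻¹ * f ξ ^ ((m - 1) / 2)

noncomputable def phaseY (m : ℝ) (f : ℝ → ℝ) (ξ : ℝ) : ℝ :=
  2 * √(m * (m - 1)) / (m - 1) * deriv (fun t => f t ^ ((m - 1) / 2)) ξ

noncomputable def phaseZ (m σ : ℝ) (f : ℝ → ℝ) (ξ : ℝ) : ℝ :=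
  (m - 1) * ξ ^ σ * f ξ ^ (m - 1)

/-- The factor `dη/dξ` of the time reparametrization. -/
noncomputable def phaseTimeScale (m : ℝ) (f : ℝ → ℝ) (ξ : ℝ) : ℝ :=
  f ξ ^ (-((m - 1) / 2)) / √(m * (m - 1))

section PhaseSpace

variable {m σ N ξ : ℝ} {f : ℝ → ℝ}

theorem hasDerivAt_phaseX (hm : 1 < m) (hξ : ξ ≠ 0) (hfξ : 0 < f ξ)
    (hu : DifferentiableAt ℝ (fun t => f t ^ ((m - 1) / 2)) ξ) :
    HasDerivAt (phaseX m f) (phaseTimeScale m f ξ *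
      ((m - 1) / 2 * phaseX m f ξ * phaseY m f ξ - phaseX m f ξ ^ 2)) ξ := by
  have hm1 : m - 1 ≠ 0 := by linarith
  have hc : 0 < √(m * (m - 1)) := Real.sqrt_pos.mpr (by nlinarith)
  have hA : 0 < f ξ ^ ((m - 1) / 2) := Real.rpow_pos_of_pos hfξ _
  have h := ((hasDerivAt_inv hξ).const_mul (√(m * (m - 1)))).fun_mul hu.hasDerivAt
  refine h.congr_deriv ?_
  simp only [phaseTimeScale, phaseX, phaseY, Real.rpow_neg hfξ.le]
  field_simp
  ring

theorem hasDerivAt_phaseZ (hm : 1 < m) (hξ : 0 < ξ) (hf : ∀ᶠ t in 𝓝 ξ, 0 < f t)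
    (hu : DifferentiableAt ℝ (fun t => f t ^ ((m - 1) / 2)) ξ) :
    HasDerivAt (phaseZ m σ f) (phaseTimeScale m f ξ *
      (phaseZ m σ f ξ * ((m - 1) * phaseY m f ξ + σ * phaseX m f ξ))) ξ := by
  have hm1 : m - 1 ≠ 0 := by linarith
  have hc : 0 < √(m * (m - 1)) := Real.sqrt_pos.mpr (by nlinarith)
  have hfξ : 0 < f ξ := hf.self_of_nhds
  have hA : 0 < f ξ ^ ((m - 1) / 2) := Real.rpow_pos_of_pos hfξ _
  have hsq : ∀ t, 0 < f t → f t ^ (m - 1) = (f t ^ ((m - 1) / 2)) ^ 2 := fun t ht => by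
    rw [← Real.rpow_natCast, ← Real.rpow_mul ht.le]
    norm_num
  have h := ((Real.hasDerivAt_rpow_const (p := σ) (Or.inl hξ.ne')).const_mul (m - 1)).fun_mul
    (hu.hasDerivAt.fun_pow 2)
  refine (h.congr_of_eventuallyEq ?_).congr_deriv ?_
  · filter_upwards [hf] with t ht
    rw [phaseZ, hsq t ht]
  · simp only [phaseTimeScale, phaseX, phaseY, phaseZ, Real.rpow_neg hfξ.le, hsq ξ hfξ,
      Real.rpow_sub_one hξ.ne']
    field_simp
    ring

theorem hasDerivAt_phaseY (hm : 1 < m) (hf : ∀ᶠ t in 𝓝 ξ, 0 < f t)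
    (hg : ∀ᶠ t in 𝓝 ξ, DifferentiableAt ℝ (fun t => f t ^ m) t)
    (hg' : DifferentiableAt ℝ (deriv fun t => f t ^ m) ξ)
    (hode : deriv (deriv fun t => f t ^ m) ξ + ((N - 1) / ξ) * deriv (fun t => f t ^ m) ξ
        - f ξ / (m - 1) + ξ ^ σ * f ξ ^ m = 0) :
    HasDerivAt (phaseY m f) (phaseTimeScale m f ξ * (-((m + 1) / 2) * phaseY m f ξ ^ 2 + 1
      - phaseZ m σ f ξ - (N - 1) * phaseX m f ξ * phaseY m f ξ)) ξ := by
  have hm0 : m ≠ 0 := by positivity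
  have hm1 : m - 1 ≠ 0 := by linarith
  have hc : 0 < √(m * (m - 1)) := Real.sqrt_pos.mpr (by nlinarith)
  have hc2 : √(m * (m - 1)) ^ 2 = m * (m - 1) := Real.sq_sqrt (by nlinarith)
  have hfξ : 0 < f ξ := hf.self_of_nhds
  have hA : 0 < f ξ ^ ((m - 1) / 2) := Real.rpow_pos_of_pos hfξ _
  have hB : f ξ ^ m = (f ξ ^ ((m - 1) / 2)) ^ 2 * f ξ := by
    rw [← Real.rpow_natCast, ← Real.rpow_mul hfξ.le, ← Real.rpow_add_one hfξ.ne']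
    norm_num
  have hY : phaseY m f =ᶠ[𝓝 ξ] fun t =>
      √(m * (m - 1)) / m * (f t ^ ((m - 1) / 2 - m) * deriv (fun t => f t ^ m) t) := by
    filter_upwards [hf.eventually_nhds, hg] with t hft hgt
    rw [phaseY, (hasDerivAt_rpow_of_hasDerivAt_rpow hft hm0 hgt.hasDerivAt _).deriv]
    field_simp
  have hg₀ := hg.self_of_nhds.hasDerivAt
  have h := ((hasDerivAt_rpow_of_hasDerivAt_rpow hf hm0 hg₀ ((m - 1) / 2 - m)).fun_mul
    hg'.hasDerivAt).const_mul (√(m * (m - 1)) / m)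
  refine (h.congr_of_eventuallyEq hY).congr_deriv ?_
  have hu := (hasDerivAt_rpow_of_hasDerivAt_rpow hf hm0 hg₀ ((m - 1) / 2)).deriv
  have hg'' : deriv (deriv fun t => f t ^ m) ξ =
      f ξ / (m - 1) - ξ ^ σ * f ξ ^ m - (N - 1) / ξ * deriv (fun t => f t ^ m) ξ := by
    linarith
  simp only [phaseTimeScale, phaseX, phaseY, phaseZ, hu, hg'', Real.rpow_neg hfξ.le,
    Real.rpow_sub hfξ, Real.rpow_one, hB]
  field_simp
  rw [hc2]
  ring

end PhaseSpace

theorem phase_space_transformation_general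
    (m σ N : ℝ) (hm : 1 < m)
    (a b : ℝ) (hI : Ioo a b ⊆ Ioi (0:ℝ))
    (f : ℝ → ℝ) (hf : ∀ ξ ∈ Ioo a b, 0 < f ξ)
    (hd1 : ∀ ξ ∈ Ioo a b, DifferentiableAt ℝ (fun t => f t ^ m) ξ)
    (hd2 : ∀ ξ ∈ Ioo a b, DifferentiableAt ℝ (deriv fun t => f t ^ m) ξ)
    (hode : ∀ ξ ∈ Ioo a b,
      deriv (deriv fun t => f t ^ m) ξ + ((N - 1) / ξ) * deriv (fun t => f t ^ m) ξ
        - f ξ / (m - 1) + ξ ^ σ * f ξ ^ m = 0)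
    (X Y Z ρ : ℝ → ℝ)
    (hX : ∀ ξ : ℝ, X ξ = Real.sqrt (m * (m - 1)) * ξ⁻¹ * f ξ ^ ((m - 1) / 2))
    (hY : ∀ ξ : ℝ, Y ξ =
      2 * Real.sqrt (m * (m - 1)) / (m - 1) * deriv (fun t => f t ^ ((m - 1) / 2)) ξ)
    (hZ : ∀ ξ : ℝ, Z ξ = (m - 1) * ξ ^ σ * f ξ ^ (m - 1))
    (hρ : ∀ ξ : ℝ, ρ ξ = f ξ ^ (-((m - 1) / 2)) / Real.sqrt (m * (m - 1))) :
    ∀ ξ ∈ Ioo a b,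
      deriv X ξ = ρ ξ * ((m - 1) / 2 * X ξ * Y ξ - X ξ ^ 2) ∧
      deriv Y ξ = ρ ξ * (-((m + 1) / 2) * Y ξ ^ 2 + 1 - Z ξ - (N - 1) * X ξ * Y ξ) ∧
      deriv Z ξ = ρ ξ * (Z ξ * ((m - 1) * Y ξ + σ * X ξ)) := by
  obtain rfl : X = phaseX m f := funext hX
  obtain rfl : Y = phaseY m f := funext hY
  obtain rfl : Z = phaseZ m σ f := funext hZ
  obtain rfl : ρ = phaseTimeScale m f := funext hρ
  intro ξ hξ
  have hI_nhds : Ioo a b ∈ 𝓝 ξ := isOpen_Ioo.mem_nhds hξ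
  have hfpos : ∀ᶠ t in 𝓝 ξ, 0 < f t := eventually_of_mem hI_nhds hf
  have hu : DifferentiableAt ℝ (fun t => f t ^ ((m - 1) / 2)) ξ :=
    (hasDerivAt_rpow_of_hasDerivAt_rpow hfpos (by positivity) (hd1 ξ hξ).hasDerivAt
      _).differentiableAt
  exact ⟨(hasDerivAt_phaseX hm (hI hξ).ne' (hf ξ hξ) hu).deriv,
    (hasDerivAt_phaseY hm hfpos (eventually_of_mem hI_nhds hd1) (hd2 ξ hξ) (hode ξ hξ)).deriv,
    (hasDerivAt_phaseZ hm (hI hξ) hfpos hu).deriv⟩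

/-- the phase-space variables
`X = √(m(m-1)) ξ⁻¹ f^{(m-1)/2}`, `Y = (2√(m(m-1))/(m-1)) (f^{(m-1)/2})'`,
`Z = (m-1) ξ^σ f^{m-1}` transform the profile ODE into the autonomous system
`Ẋ = ((m-1)/2)XY - X²`, `Ẏ = -((m+1)/2)Y² + 1 - Z - (N-1)XY`,
`Ż = Z[(m-1)Y + σX]` after the time reparametrization with factor
`ρ = f^{-(m-1)/2}/√(m(m-1))`. -/
theorem phase_space_transformation
    (m σ N : ℝ) (hm : 1 < m) (hσ : 0 ≤ σ) (hN : 1 ≤ N)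
    (a b : ℝ) (hI : Ioo a b ⊆ Ioi (0:ℝ))
    (f : ℝ → ℝ) (hf : ∀ ξ ∈ Ioo a b, 0 < f ξ)
    (hd1 : ∀ ξ ∈ Ioo a b, DifferentiableAt ℝ (fun t => f t ^ m) ξ)
    (hd2 : ∀ ξ ∈ Ioo a b, DifferentiableAt ℝ (deriv fun t => f t ^ m) ξ)
    (hode : ∀ ξ ∈ Ioo a b,
      deriv (deriv fun t => f t ^ m) ξ + ((N - 1) / ξ) * deriv (fun t => f t ^ m) ξ
        - f ξ / (m - 1) + ξ ^ σ * f ξ ^ m = 0)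
    (X Y Z ρ : ℝ → ℝ)
    (hX : ∀ ξ : ℝ, X ξ = Real.sqrt (m * (m - 1)) * ξ⁻¹ * f ξ ^ ((m - 1) / 2))
    (hY : ∀ ξ : ℝ, Y ξ =
      2 * Real.sqrt (m * (m - 1)) / (m - 1) * deriv (fun t => f t ^ ((m - 1) / 2)) ξ)
    (hZ : ∀ ξ : ℝ, Z ξ = (m - 1) * ξ ^ σ * f ξ ^ (m - 1))
    (hρ : ∀ ξ : ℝ, ρ ξ = f ξ ^ (-((m - 1) / 2)) / Real.sqrt (m * (m - 1))) :
    ∀ ξ ∈ Ioo a b,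
      deriv X ξ = ρ ξ * ((m - 1) / 2 * X ξ * Y ξ - X ξ ^ 2) ∧
      deriv Y ξ = ρ ξ * (-((m + 1) / 2) * Y ξ ^ 2 + 1 - Z ξ - (N - 1) * X ξ * Y ξ) ∧
      deriv Z ξ = ρ ξ * (Z ξ * ((m - 1) * Y ξ + σ * X ξ)) :=
  phase_space_transformation_general m σ N hm a b hI f hf hd1 hd2 hode X Y Z ρ hX hY hZ hρ
end

section
/- Let m > 1 and let (Y, Z) : I → ℝ × (0,∞) be a differentiable solution on an open interval I of the planar system Y'(t) = −((m+1)/2) Y(t)² + 1 − Z(t), Z'(t) = (m−1) Y(t) Z(t), with Z(t) > 0 on I. Then the function E(t) := Z(t)^{(m+1)/(m−1)} · (2/(m+1) − Z(t)/m − Y(t)²) is constant on I. Equivalently, for each solution there is a constant K such that Y(t)² = 2/(m+1) − Z(t)/m − K·Z(t)^{−(m+1)/(m−1)} for all t ∈ I. -/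
/-!
Along the flow, `Z' = (m-1) Y Z` gives `(Z^α)' = (m+1) Y Z^α` for `α = (m+1)/(m-1)`, while the
bracket `G = 2/(m+1) - Z/m - Y²` satisfies `G' = -(m+1) Y G`. The logarithmic derivatives
cancel, so `E = Z^α G` has zero derivative and is constant on the (connected) interval; solving
`E = K` for `Y²` gives the second form.
-/

open Set

noncomputable def planarFirstIntegral (m y z : ℝ) : ℝ :=
  z ^ ((m + 1) / (m - 1)) * (2 / (m + 1) - z / m - y ^ 2)

theorem HasDerivAt.rpow_const_of_deriv_eq_mul_self {f : ℝ → ℝ} {g p t : ℝ}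
    (hf : HasDerivAt f (g * f t) t) (hft : f t ≠ 0) :
    HasDerivAt (fun s => f s ^ p) (p * g * f t ^ p) t := by
  convert hf.rpow_const (p := p) (Or.inl hft) using 1
  rw [Real.rpow_sub_one hft]
  field_simp

section PlanarSystem

variable {m : ℝ} {Y Z : ℝ → ℝ} {t : ℝ}

theorem hasDerivAt_planarFirstIntegral (hm : 1 < m)
    (hY : HasDerivAt Y (-((m + 1) / 2) * Y t ^ 2 + 1 - Z t) t)
    (hZ : HasDerivAt Z ((m - 1) * Y t * Z t) t) (hZpos : 0 < Z t) :
    HasDerivAt (fun s => planarFirstIntegral m (Y s) (Z s)) 0 t := by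
  have hm0 : m ≠ 0 := by positivity
  have hm1 : m - 1 ≠ 0 := sub_ne_zero.mpr hm.ne'
  have hm1' : m + 1 ≠ 0 := by positivity
  have hpow : HasDerivAt (fun s => Z s ^ ((m + 1) / (m - 1)))
      ((m + 1) * Y t * Z t ^ ((m + 1) / (m - 1))) t := by
    convert hZ.rpow_const_of_deriv_eq_mul_self hZpos.ne' using 1
    field_simp
  have hbracket : HasDerivAt (fun s => 2 / (m + 1) - Z s / m - Y s ^ 2)
      (-(m + 1) * Y t * (2 / (m + 1) - Z t / m - Y t ^ 2)) t := by
    refine (((hasDerivAt_const t _).sub (hZ.div_const m)).sub (hY.pow 2)).congr_deriv ?_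
    field_simp
    ring
  exact (hpow.mul hbracket).congr_deriv (by ring)

theorem sq_eq_of_planarFirstIntegral_eq {y z K : ℝ} (hz : 0 < z)
    (h : planarFirstIntegral m y z = K) :
    y ^ 2 = 2 / (m + 1) - z / m - K * z ^ (-((m + 1) / (m - 1))) := by
  have hzα : z ^ ((m + 1) / (m - 1)) ≠ 0 := (Real.rpow_pos_of_pos hz _).ne'
  rw [← h, planarFirstIntegral, Real.rpow_neg hz.le]
  field_simp
  ring

end PlanarSystem

/-- the planar system `Y' = -((m+1)/2)Y² + 1 - Z`,
`Z' = (m-1)YZ` (the restriction of the phase-space system to `{X = 0}`) has the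
first integral `E = Z^{(m+1)/(m-1)}(2/(m+1) - Z/m - Y²)`; equivalently, each
solution satisfies `Y² = 2/(m+1) - Z/m - K·Z^{-(m+1)/(m-1)}` for some constant
`K`. -/
theorem first_integral_invariant_plane
    (m : ℝ) (hm : 1 < m) (a b : ℝ)
    (Y Z : ℝ → ℝ)
    (hY : ∀ t ∈ Ioo a b, HasDerivAt Y (-((m + 1) / 2) * Y t ^ 2 + 1 - Z t) t)
    (hZ : ∀ t ∈ Ioo a b, HasDerivAt Z ((m - 1) * Y t * Z t) t)
    (hZpos : ∀ t ∈ Ioo a b, 0 < Z t) :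
    (∀ t1 ∈ Ioo a b, ∀ t2 ∈ Ioo a b,
        Z t1 ^ ((m + 1) / (m - 1)) * (2 / (m + 1) - Z t1 / m - Y t1 ^ 2)
          = Z t2 ^ ((m + 1) / (m - 1)) * (2 / (m + 1) - Z t2 / m - Y t2 ^ 2)) ∧
    (∃ K : ℝ, ∀ t ∈ Ioo a b,
        Y t ^ 2 = 2 / (m + 1) - Z t / m - K * Z t ^ (-((m + 1) / (m - 1)))) := by
  have hE : ∀ t ∈ Ioo a b, HasDerivAt (fun s => planarFirstIntegral m (Y s) (Z s)) 0 t :=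
    fun t ht => hasDerivAt_planarFirstIntegral hm (hY t ht) (hZ t ht) (hZpos t ht)
  obtain ⟨K, hK⟩ : ∃ K, ∀ t ∈ Ioo a b, planarFirstIntegral m (Y t) (Z t) = K :=
    isOpen_Ioo.exists_is_const_of_deriv_eq_zero isPreconnected_Ioo
      (fun t ht => (hE t ht).differentiableAt.differentiableWithinAt)
      (fun t ht => (hE t ht).deriv)
  exact ⟨fun t1 ht1 t2 ht2 => (hK t1 ht1).trans (hK t2 ht2).symm,
    K, fun t ht => sq_eq_of_planarFirstIntegral_eq (hZpos t ht) (hK t ht)⟩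
end

section
/- Let m > 1, σ ≥ 0, N real, h0 = √(2/(m+1)), and define the surface function S(X,H) = −mH² − ((σ+2)(2N+σ−2)/(8m))X² − (N−1+σ/2)XH + ((2N+σ−2)h0/2)X + 2mh0·H, the normal vector n(X,H) = (−((σ+2)(2N+σ−2)/(4m))X − ((2N+σ−2)/2)H + ((2N+σ−2)/2)h0, −2mH − ((2N+σ−2)/2)X + 2mh0, −1), and the translated vector field V(X,H,Z) = (((m−1)/2)XH − ((m−1)h0/2)X − X², −((m+1)/2)H² + (m+1)h0·H − Z − (N−1)XH + (N−1)h0·X, Z[(m−1)H − (m−1)h0 + σX]). Then for all real X, H, the dot product n(X,H) · V(X,H,S(X,H)) equals F(X) = −(K1(σ)/(2(m+1)))X − ((2N−σ−6)(2N+σ−2)(σ+2)/(16m))X³, where K1(σ) = (3m+1)σ − 2(m−1)(N−1). -/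
/-! Expanding the scalar product on the surface, every monomial containing `H` cancels for an
arbitrary `h0`, leaving `-(K1 h0² / 4) X` plus the cubic term. The choice of `h0` is exactly
what makes `P1` critical, `(m + 1) h0² = 2`, which turns the linear coefficient into
`-K1 / (2 (m + 1))`. -/

noncomputable def separatrixSurface (m σ N h0 X H : ℝ) : ℝ :=
  -m * H ^ 2 - ((σ + 2) * (2 * N + σ - 2) / (8 * m)) * X ^ 2
      - (N - 1 + σ / 2) * X * H + ((2 * N + σ - 2) * h0 / 2) * X + 2 * m * h0 * H

noncomputable def separatrixNormal (m σ N h0 X H : ℝ) : Fin 3 → ℝ :=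
  ![-((σ + 2) * (2 * N + σ - 2) / (4 * m)) * X - ((2 * N + σ - 2) / 2) * H
      + ((2 * N + σ - 2) / 2) * h0,
    -(2 * m) * H - ((2 * N + σ - 2) / 2) * X + 2 * m * h0,
    -1]

noncomputable def translatedField (m σ N h0 X H Z : ℝ) : Fin 3 → ℝ :=
  ![(m - 1) / 2 * X * H - (m - 1) * h0 / 2 * X - X ^ 2,
    -((m + 1) / 2) * H ^ 2 + (m + 1) * h0 * H - Z - (N - 1) * X * H + (N - 1) * h0 * X,
    Z * ((m - 1) * H - (m - 1) * h0 + σ * X)]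

theorem separatrixNormal_dotProduct_translatedField (m σ N h0 X H : ℝ) (hm : m ≠ 0) :
    separatrixNormal m σ N h0 X H ⬝ᵥ
        translatedField m σ N h0 X H (separatrixSurface m σ N h0 X H)
      = -(((3 * m + 1) * σ - 2 * (m - 1) * (N - 1)) * h0 ^ 2 / 4) * X
        - ((2 * N - σ - 6) * (2 * N + σ - 2) * (σ + 2) / (16 * m)) * X ^ 3 := by
  simp only [separatrixNormal, translatedField, separatrixSurface, dotProduct, Fin.sum_univ_three,
    Matrix.cons_val_zero, Matrix.cons_val_one, Matrix.cons_val_two, Matrix.head_cons, Matrix.tail_cons]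
  field_simp
  ring

theorem flow_on_separatrix_surface_general
    (m σ N h0 : ℝ) (hm : 1 < m)
    (hh0 : h0 = Real.sqrt (2 / (m + 1)))
    (K1 : ℝ) (hK1 : K1 = (3 * m + 1) * σ - 2 * (m - 1) * (N - 1))
    (S : ℝ → ℝ → ℝ)
    (hS : ∀ X H : ℝ, S X H = -m * H ^ 2 - ((σ + 2) * (2 * N + σ - 2) / (8 * m)) * X ^ 2
      - (N - 1 + σ / 2) * X * H + ((2 * N + σ - 2) * h0 / 2) * X + 2 * m * h0 * H) :
    ∀ X H : ℝ,
      (-((σ + 2) * (2 * N + σ - 2) / (4 * m)) * X - ((2 * N + σ - 2) / 2) * H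
          + ((2 * N + σ - 2) / 2) * h0)
        * ((m - 1) / 2 * X * H - (m - 1) * h0 / 2 * X - X ^ 2)
      + (-(2 * m) * H - ((2 * N + σ - 2) / 2) * X + 2 * m * h0)
        * (-((m + 1) / 2) * H ^ 2 + (m + 1) * h0 * H - S X H - (N - 1) * X * H
            + (N - 1) * h0 * X)
      + (-1) * (S X H * ((m - 1) * H - (m - 1) * h0 + σ * X))
      = -(K1 / (2 * (m + 1))) * X
        - ((2 * N - σ - 6) * (2 * N + σ - 2) * (σ + 2) / (16 * m)) * X ^ 3 := by
  intro X H
  obtain rfl : S = separatrixSurface m σ N h0 := funext₂ hS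
  have hh0sq : h0 ^ 2 = 2 / (m + 1) := hh0 ▸ Real.sq_sqrt (by positivity)
  have hdot := separatrixNormal_dotProduct_translatedField m σ N h0 X H (by positivity)
  simp only [separatrixNormal, translatedField, dotProduct, Fin.sum_univ_three, Matrix.cons_val_zero,
    Matrix.cons_val_one, Matrix.cons_val_two, Matrix.head_cons, Matrix.tail_cons] at hdot
  rw [hdot, hh0sq, hK1]
  field_simp
  ring

/-- the scalar product between the normal of the separatrix
surface `Z = S(X,H)` and the translated phase-space vector field, evaluated on
the surface, equals
`F(X) = -(K1(σ)/(2(m+1)))X - ((2N-σ-6)(2N+σ-2)(σ+2)/(16m))X³`. -/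
theorem flow_on_separatrix_surface
    (m σ N h0 : ℝ) (hm : 1 < m) (hσ : 0 ≤ σ)
    (hh0 : h0 = Real.sqrt (2 / (m + 1)))
    (K1 : ℝ) (hK1 : K1 = (3 * m + 1) * σ - 2 * (m - 1) * (N - 1))
    (S : ℝ → ℝ → ℝ)
    (hS : ∀ X H : ℝ, S X H = -m * H ^ 2 - ((σ + 2) * (2 * N + σ - 2) / (8 * m)) * X ^ 2
      - (N - 1 + σ / 2) * X * H + ((2 * N + σ - 2) * h0 / 2) * X + 2 * m * h0 * H) :
    ∀ X H : ℝ,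
      (-((σ + 2) * (2 * N + σ - 2) / (4 * m)) * X - ((2 * N + σ - 2) / 2) * H
          + ((2 * N + σ - 2) / 2) * h0)
        * ((m - 1) / 2 * X * H - (m - 1) * h0 / 2 * X - X ^ 2)
      + (-(2 * m) * H - ((2 * N + σ - 2) / 2) * X + 2 * m * h0)
        * (-((m + 1) / 2) * H ^ 2 + (m + 1) * h0 * H - S X H - (N - 1) * X * H
            + (N - 1) * h0 * X)
      + (-1) * (S X H * ((m - 1) * H - (m - 1) * h0 + σ * X))
      = -(K1 / (2 * (m + 1))) * X
        - ((2 * N - σ - 6) * (2 * N + σ - 2) * (σ + 2) / (16 * m)) * X ^ 3 :=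
  flow_on_separatrix_surface_general m σ N h0 hm hh0 K1 hK1 S hS
end

section
/- Let m > 1, σ ≥ 0, N real, and let f : I → (0,∞) be a positive function on an open interval I ⊂ (0,∞) such that ξ ↦ f(ξ)^m is twice differentiable on I and f satisfies the profile ODE on I. Define x(ξ) = ξ² f(ξ)^{1−m}/(m(m−1)), y(ξ) = ξ f'(ξ)/f(ξ), z(ξ) = ξ^{σ+2}/m. Then for all ξ ∈ I: ξ·x'(ξ) = x(ξ)·(2 − (m−1)y(ξ)), ξ·y'(ξ) = −m·y(ξ)² − (N−2)y(ξ) + x(ξ) − z(ξ), and ξ·z'(ξ) = (σ+2)·z(ξ). -/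
open Set Filter Topology

/-!
Everything is a computation with the Euler operator `ξ d/dξ`. It maps a monomial `ξ^n f^p` to
`ξ^n f^p (n + p y)`, which gives the equations for `x` and `z`. Since `y = ξ (f^m)' / (m f^m)`,
the quotient rule gives the Riccati-type identity `ξ y' = y + ξ² (f^m)'' / (m f^m) - m y²`, and
the profile ODE expresses `ξ² (f^m)'' / f^m` through `x`, `z` and `y`. Differentiability of `f`
itself comes from `f = (f^m)^{1/m}` on the interval.
-/

lemma hasDerivAt_of_hasDerivAt_rpow {f : ℝ → ℝ} {m g' t : ℝ} (hm : m ≠ 0)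
    (hf : ∀ᶠ s in 𝓝 t, 0 < f s) (h : HasDerivAt (fun s => f s ^ m) g' t) :
    HasDerivAt f (g' / m * f t ^ (1 - m)) t := by
  have ht : 0 < f t := hf.self_of_nhds
  have hroot : (fun s => (f s ^ m) ^ m⁻¹) =ᶠ[𝓝 t] f := by
    filter_upwards [hf] with s hs
    rw [← Real.rpow_mul hs.le, mul_inv_cancel₀ hm, Real.rpow_one]
  have hexp : (f t ^ m) ^ (m⁻¹ - 1) = f t ^ (1 - m) := by
    rw [← Real.rpow_mul ht.le]
    congr 1
    field_simp
  refine ((h.rpow_const (Or.inl (Real.rpow_pos_of_pos ht m).ne')).congr_of_eventuallyEq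
    hroot.symm).congr_deriv ?_
  rw [hexp]
  ring

lemma logDeriv_eq_logDeriv_rpow_div {f : ℝ → ℝ} {m t : ℝ} (hm : m ≠ 0)
    (hf : ∀ᶠ s in 𝓝 t, 0 < f s) (h : DifferentiableAt ℝ (fun s => f s ^ m) t) :
    logDeriv f t = logDeriv (fun s => f s ^ m) t / m := by
  have ht : 0 < f t := hf.self_of_nhds
  rw [logDeriv_apply, logDeriv_apply, (hasDerivAt_of_hasDerivAt_rpow hm hf h.hasDerivAt).deriv,
    Real.rpow_sub ht, Real.rpow_one]
  field_simp [ht.ne', (Real.rpow_pos_of_pos ht m).ne']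

lemma mul_deriv_eq_of_eq_pow_mul_rpow_div {f u : ℝ → ℝ} {ξ p c : ℝ} {n : ℕ}
    (hu : ∀ t, u t = t ^ n * f t ^ p / c) (hf : DifferentiableAt ℝ f ξ) (hpos : 0 < f ξ) :
    ξ * deriv u ξ = u ξ * (n + p * (ξ * deriv f ξ / f ξ)) := by
  obtain rfl : u = _ := funext hu
  have hd := ((hasDerivAt_pow n ξ).fun_mul
    (hf.hasDerivAt.rpow_const (p := p) (Or.inl hpos.ne'))).div_const c
  rw [hd.deriv, Real.rpow_sub_one hpos.ne']
  rcases n with _ | n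
  · simp
    field_simp
  · rw [Nat.add_sub_cancel, pow_succ]
    field_simp
    ring

lemma mul_deriv_eq_of_eq_rpow_div {u : ℝ → ℝ} {ξ s c : ℝ} (hu : ∀ t, u t = t ^ s / c)
    (hξ : ξ ≠ 0) : ξ * deriv u ξ = s * u ξ := by
  obtain rfl : u = _ := funext hu
  rw [deriv_div_const, Real.deriv_rpow_const, Real.rpow_sub_one hξ]
  field_simp

lemma mul_deriv_mul_logDeriv {g : ℝ → ℝ} {ξ : ℝ} (hg : g ξ ≠ 0)
    (h1 : DifferentiableAt ℝ g ξ) (h2 : DifferentiableAt ℝ (deriv g) ξ) :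
    ξ * deriv (fun t => t * logDeriv g t) ξ
      = ξ * logDeriv g ξ + ξ ^ 2 * deriv (deriv g) ξ / g ξ - (ξ * logDeriv g ξ) ^ 2 := by
  simp only [logDeriv_apply]
  rw [((hasDerivAt_id' ξ).fun_mul (h2.hasDerivAt.fun_div h1.hasDerivAt hg)).deriv]
  field_simp
  ring

lemma sq_mul_deriv_deriv_div_eq_of_profile {f g : ℝ → ℝ} {m σ N ξ : ℝ} (hm : m ≠ 1)
    (hξ : 0 < ξ) (hf : 0 < f ξ) (hg : g ξ = f ξ ^ m)
    (hode : deriv (deriv g) ξ + ((N - 1) / ξ) * deriv g ξ - f ξ / (m - 1) + ξ ^ σ * f ξ ^ m = 0) :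
    ξ ^ 2 * deriv (deriv g) ξ / g ξ
      = ξ ^ 2 * f ξ ^ (1 - m) / (m - 1) - ξ ^ (σ + 2) - (N - 1) * (ξ * logDeriv g ξ) := by
  have hm1 : m - 1 ≠ 0 := sub_ne_zero.2 hm
  have hgpos : 0 < g ξ := hg ▸ Real.rpow_pos_of_pos hf m
  have hg'' : deriv (deriv g) ξ = f ξ / (m - 1) - ξ ^ σ * g ξ - (N - 1) / ξ * deriv g ξ := by
    rw [hg]
    linarith
  rw [hg'', logDeriv_apply, Real.rpow_sub hf, Real.rpow_one, ← hg, Real.rpow_add hξ, Real.rpow_two]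
  field_simp

theorem second_phase_space_transformation_general
    (m σ N : ℝ) (hm : 1 < m)
    (a b : ℝ) (hI : Ioo a b ⊆ Ioi (0:ℝ))
    (f : ℝ → ℝ) (hf : ∀ ξ ∈ Ioo a b, 0 < f ξ)
    (hd1 : ∀ ξ ∈ Ioo a b, DifferentiableAt ℝ (fun t => f t ^ m) ξ)
    (hd2 : ∀ ξ ∈ Ioo a b, DifferentiableAt ℝ (deriv fun t => f t ^ m) ξ)
    (hode : ∀ ξ ∈ Ioo a b,
      deriv (deriv fun t => f t ^ m) ξ + ((N - 1) / ξ) * deriv (fun t => f t ^ m) ξ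
        - f ξ / (m - 1) + ξ ^ σ * f ξ ^ m = 0)
    (x y z : ℝ → ℝ)
    (hx : ∀ ξ : ℝ, x ξ = ξ ^ 2 * f ξ ^ (1 - m) / (m * (m - 1)))
    (hy : ∀ ξ : ℝ, y ξ = ξ * deriv f ξ / f ξ)
    (hz : ∀ ξ : ℝ, z ξ = ξ ^ (σ + 2) / m) :
    ∀ ξ ∈ Ioo a b,
      ξ * deriv x ξ = x ξ * (2 - (m - 1) * y ξ) ∧
      ξ * deriv y ξ = -(m * y ξ ^ 2) - (N - 2) * y ξ + x ξ - z ξ ∧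
      ξ * deriv z ξ = (σ + 2) * z ξ := by
  have hm0 : m ≠ 0 := by positivity
  have hfpos : ∀ t ∈ Ioo a b, ∀ᶠ s in 𝓝 t, 0 < f s := fun t ht =>
    eventually_of_mem (isOpen_Ioo.mem_nhds ht) hf
  have hy_eq : EqOn y (fun t => t * logDeriv (fun s => f s ^ m) t / m) (Ioo a b) :=
    fun t ht => by
      rw [hy, mul_div_assoc, ← logDeriv_apply,
        logDeriv_eq_logDeriv_rpow_div hm0 (hfpos t ht) (hd1 t ht), ← mul_div_assoc]
  generalize hg : (fun t => f t ^ m) = g at hd1 hd2 hode hy_eq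
  have hgt : ∀ t, g t = f t ^ m := fun t => hg ▸ rfl
  intro ξ hξ
  have hξ0 : 0 < ξ := hI hξ
  have hgξ : 0 < g ξ := hgt ξ ▸ Real.rpow_pos_of_pos (hf ξ hξ) m
  refine ⟨?_, ?_, ?_⟩
  · have hfd : DifferentiableAt ℝ f ξ :=
      (hasDerivAt_of_hasDerivAt_rpow hm0 (hfpos ξ hξ) (hg ▸ hd1 ξ hξ).hasDerivAt).differentiableAt
    rw [mul_deriv_eq_of_eq_pow_mul_rpow_div hx hfd (hf ξ hξ), ← hy]
    push_cast
    ring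
  · rw [(eventuallyEq_of_mem (isOpen_Ioo.mem_nhds hξ) hy_eq).deriv_eq, deriv_div_const,
      mul_div_assoc', mul_deriv_mul_logDeriv hgξ.ne' (hd1 ξ hξ) (hd2 ξ hξ),
      sq_mul_deriv_deriv_div_eq_of_profile hm.ne' hξ0 (hf ξ hξ) (hgt ξ) (hode ξ hξ),
      hy_eq hξ, hx, hz]
    field_simp
    ring
  · exact mul_deriv_eq_of_eq_rpow_div hz hξ0.ne'

/-- the variables `x = ξ²f^{1-m}/(m(m-1))`, `y = ξf'/f`,
`z = ξ^{σ+2}/m` transform the profile ODE into the autonomous system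
`ẋ = x(2-(m-1)y)`, `ẏ = -my² - (N-2)y + x - z`, `ż = (σ+2)z` with respect to
the independent variable `η` given by `d/dη = ξ d/dξ`. -/
theorem second_phase_space_transformation
    (m σ N : ℝ) (hm : 1 < m) (hσ : 0 ≤ σ)
    (a b : ℝ) (hI : Ioo a b ⊆ Ioi (0:ℝ))
    (f : ℝ → ℝ) (hf : ∀ ξ ∈ Ioo a b, 0 < f ξ)
    (hd1 : ∀ ξ ∈ Ioo a b, DifferentiableAt ℝ (fun t => f t ^ m) ξ)
    (hd2 : ∀ ξ ∈ Ioo a b, DifferentiableAt ℝ (deriv fun t => f t ^ m) ξ)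
    (hode : ∀ ξ ∈ Ioo a b,
      deriv (deriv fun t => f t ^ m) ξ + ((N - 1) / ξ) * deriv (fun t => f t ^ m) ξ
        - f ξ / (m - 1) + ξ ^ σ * f ξ ^ m = 0)
    (x y z : ℝ → ℝ)
    (hx : ∀ ξ : ℝ, x ξ = ξ ^ 2 * f ξ ^ (1 - m) / (m * (m - 1)))
    (hy : ∀ ξ : ℝ, y ξ = ξ * deriv f ξ / f ξ)
    (hz : ∀ ξ : ℝ, z ξ = ξ ^ (σ + 2) / m) :
    ∀ ξ ∈ Ioo a b,
      ξ * deriv x ξ = x ξ * (2 - (m - 1) * y ξ) ∧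
      ξ * deriv y ξ = -(m * y ξ ^ 2) - (N - 2) * y ξ + x ξ - z ξ ∧
      ξ * deriv z ξ = (σ + 2) * z ξ :=
  second_phase_space_transformation_general m σ N hm a b hI f hf hd1 hd2 hode x y z hx hy hz
end

section
/- Let m > 1, N ≥ 2 an integer, and h0 = √(2/(m+1)). Consider the planar system X'(t) = ((m−1)/2)X(t)Y(t) − X(t)², Y'(t) = −((m+1)/2)Y(t)² + 1 − (N−1)X(t)Y(t). Then the closed rectangle R = [0, (m−1)h0/2] × [0, h0] is positively invariant: for every solution (X, Y) defined on an interval [t0, t1] with (X(t0), Y(t0)) ∈ R, one has (X(t), Y(t)) ∈ R for every t ∈ [t0, t1]. -/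
/-! Each side of the rectangle is a barrier. Beyond `X = 0` and `Y = 0` one has
`(-X)' = g (-X)` and `(-Y)' ≤ g (-Y)` with `g` continuous, hence bounded; beyond `Y = h0`,
`Y' < 0` because `((m+1)/2) Y² > 1` and `(N-1) X Y ≥ 0`; beyond `X = (m-1) h0 / 2`,
`X' = X ((m-1)/2 Y - X) < 0` once `Y ≤ h0` is known. Squaring the positive part of the signed
distance to a side turns each barrier into a linear differential inequality, and Grönwall's lemma
keeps that square at zero. -/

open Set Filter Topology

theorem hasDerivAt_max_zero_sq (x : ℝ) :
    HasDerivAt (fun y : ℝ => max y 0 ^ 2) (2 * max x 0) x := by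
  rcases lt_trichotomy x 0 with hx | rfl | hx
  · rw [max_eq_right hx.le, mul_zero]
    refine (hasDerivAt_const x 0).congr_of_eventuallyEq ?_
    filter_upwards [Iio_mem_nhds hx] with y hy
    simp [max_eq_right (mem_Iio.mp hy).le]
  · have hO : (fun y : ℝ => max y 0 ^ 2) =O[𝓝 0] fun y => ‖y - 0‖ ^ 2 := by
      refine Asymptotics.IsBigO.of_bound 1 (Eventually.of_forall fun y => ?_)
      rcases le_total y 0 with hy | hy
      · simp [max_eq_right hy]; positivity
      · simp [max_eq_left hy]
    simpa using (hO.hasFDerivAt (𝕜 := ℝ) one_lt_two).hasDerivAt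
  · rw [max_eq_left hx.le]
    refine (hasDerivAt_pow 2 x).congr_of_eventuallyEq ?_ |>.congr_deriv (by ring)
    filter_upwards [Ioi_mem_nhds hx] with y hy
    simp [max_eq_left (mem_Ioi.mp hy).le]

theorem nonpos_of_hasDerivAt_le_const_mul_of_pos {f f' : ℝ → ℝ} {a b K : ℝ}
    (hf : ∀ t ∈ Icc a b, HasDerivAt f (f' t) t) (ha : f a ≤ 0)
    (bound : ∀ t ∈ Icc a b, 0 < f t → f' t ≤ K * f t) :
    ∀ t ∈ Icc a b, f t ≤ 0 := by
  set g : ℝ → ℝ := fun t => max (f t) 0 ^ 2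
  have hg : ∀ t ∈ Icc a b, HasDerivAt g (2 * max (f t) 0 * f' t) t := fun t ht =>
    (hasDerivAt_max_zero_sq (f t)).comp t (hf t ht)
  have hg_bound : ∀ t ∈ Ico a b, 2 * max (f t) 0 * f' t ≤ 2 * K * g t + 0 := by
    intro t ht
    rcases le_or_gt (f t) 0 with hft | hft
    · simp [g, max_eq_right hft]
    · have := bound t (Ico_subset_Icc_self ht) hft
      simp only [g, max_eq_left hft.le]
      nlinarith
  have hg_nonpos := le_gronwallBound_of_liminf_deriv_right_le (δ := 0)
    (fun t ht => (hg t ht).continuousAt.continuousWithinAt)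
    (fun t ht _ hr => (hg t (Ico_subset_Icc_self ht)).hasDerivWithinAt.liminf_right_slope_le hr)
    (by simp [g, max_eq_right ha]) hg_bound
  intro t ht
  simpa [g, gronwallBound_ε0_δ0] using hg_nonpos t ht

theorem nonpos_of_hasDerivAt_le_mul_of_pos {f f' g : ℝ → ℝ} {a b : ℝ}
    (hf : ∀ t ∈ Icc a b, HasDerivAt f (f' t) t) (hg : ContinuousOn g (Icc a b)) (ha : f a ≤ 0)
    (bound : ∀ t ∈ Icc a b, 0 < f t → f' t ≤ g t * f t) :
    ∀ t ∈ Icc a b, f t ≤ 0 := by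
  obtain ⟨K, hK⟩ := isCompact_Icc.bddAbove_image hg
  refine nonpos_of_hasDerivAt_le_const_mul_of_pos (K := K) hf ha fun t ht hft => ?_
  calc f' t ≤ g t * f t := bound t ht hft
    _ ≤ K * f t := mul_le_mul_of_nonneg_right (hK (mem_image_of_mem g ht)) hft.le

/-- the rectangle `[0, (m-1)h0/2] × [0, h0]`, with
`h0 = √(2/(m+1))`, is positively invariant for the planar system
`X' = ((m-1)/2)XY - X²`, `Y' = -((m+1)/2)Y² + 1 - (N-1)XY` (the restriction of
the phase-space system to the invariant plane `{Z = 0}`). -/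
theorem rectangle_positively_invariant
    (m : ℝ) (hm : 1 < m) (N : ℕ) (hN : 2 ≤ N)
    (h0 : ℝ) (hh0 : h0 = Real.sqrt (2 / (m + 1)))
    (t0 t1 : ℝ) (X Y : ℝ → ℝ)
    (hX : ∀ t ∈ Icc t0 t1, HasDerivAt X ((m - 1) / 2 * X t * Y t - X t ^ 2) t)
    (hY : ∀ t ∈ Icc t0 t1,
      HasDerivAt Y (-((m + 1) / 2) * Y t ^ 2 + 1 - ((N : ℝ) - 1) * X t * Y t) t)
    (hinit : X t0 ∈ Icc 0 ((m - 1) * h0 / 2) ∧ Y t0 ∈ Icc 0 h0) :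
    ∀ t ∈ Icc t0 t1, X t ∈ Icc 0 ((m - 1) * h0 / 2) ∧ Y t ∈ Icc 0 h0 := by
  have h0_nonneg : 0 ≤ h0 := hh0 ▸ Real.sqrt_nonneg _
  have h0_sq : (m + 1) / 2 * h0 ^ 2 = 1 := by
    rw [hh0, Real.sq_sqrt (by positivity)]; field_simp
  have hN1 : (1 : ℝ) ≤ N := by exact_mod_cast one_le_two.trans hN
  have hXc : ContinuousOn X (Icc t0 t1) := fun t ht => (hX t ht).continuousAt.continuousWithinAt
  have hYc : ContinuousOn Y (Icc t0 t1) := fun t ht => (hY t ht).continuousAt.continuousWithinAt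
  have hX_nonneg : ∀ t ∈ Icc t0 t1, 0 ≤ X t := by
    simpa using nonpos_of_hasDerivAt_le_mul_of_pos (f := fun t => -X t)
      (g := fun t => (m - 1) / 2 * Y t - X t) (fun t ht => (hX t ht).neg) (by fun_prop)
      (by linarith [hinit.1.1]) fun t _ _ => le_of_eq (by ring)
  have hY_nonneg : ∀ t ∈ Icc t0 t1, 0 ≤ Y t := by
    simpa using nonpos_of_hasDerivAt_le_mul_of_pos (f := fun t => -Y t)
      (g := fun t => -((m + 1) / 2) * Y t - ((N : ℝ) - 1) * X t) (fun t ht => (hY t ht).neg)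
      (by fun_prop) (by linarith [hinit.2.1]) fun t _ _ => by linarith
  have hY_le : ∀ t ∈ Icc t0 t1, Y t ≤ h0 := by
    simpa [sub_nonpos] using nonpos_of_hasDerivAt_le_const_mul_of_pos (K := 0)
      (fun t ht => (hY t ht).sub_const h0) (by linarith [hinit.2.2])
      fun t ht hYt => by
        have := mul_nonneg (mul_nonneg (sub_nonneg.2 hN1) (hX_nonneg t ht)) (hY_nonneg t ht)
        rw [zero_mul]; nlinarith
  have hX_le : ∀ t ∈ Icc t0 t1, X t ≤ (m - 1) * h0 / 2 := by
    simpa [sub_nonpos] using nonpos_of_hasDerivAt_le_const_mul_of_pos (K := 0)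
      (fun t ht => (hX t ht).sub_const ((m - 1) * h0 / 2))
      (by linarith [hinit.1.2])
      fun t ht hXt => by
        have := mul_le_mul_of_nonneg_left (hY_le t ht)
          (mul_nonneg (by linarith : (0 : ℝ) ≤ (m - 1) / 2) (hX_nonneg t ht))
        rw [zero_mul]; nlinarith [hX_nonneg t ht]
  exact fun t ht => ⟨⟨hX_nonneg t ht, hX_le t ht⟩, hY_nonneg t ht, hY_le t ht⟩
end

section
/- Let m > 1 and N real, and set σ_c = 2(N−1)(m−1)/(3m+1) and K1(σ) = (3m+1)σ − 2(m−1)(N−1). Then for σ = σ_c the flow expression F(X) = −(K1(σ)/(2(m+1)))X − ((2N−σ−6)(2N+σ−2)(σ+2)/(16m))X³ equals F(X) = −(4(N−1)(mN+2m−N+2)[m(N−4)+N−2]/(3m+1)³)·X³. In particular, for every X > 0: if N ≥ 4 then F(X) < 0, while if N = 2 or N = 3 then F(X) > 0. -/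
open Set

/-- at the critical exponent `σ = σ_c = 2(N-1)(m-1)/(3m+1)`
(where `K1(σ_c) = 0`), the flow expression
`F(X) = -(K1/(2(m+1)))X - ((2N-σ-6)(2N+σ-2)(σ+2)/(16m))X³` reduces to
`F(X) = -(4(N-1)(mN+2m-N+2)[m(N-4)+N-2]/(3m+1)³)X³`; in particular, for
`X > 0`, `F(X) < 0` if `N ≥ 4`, while `F(X) > 0` if `N = 2` or `N = 3`. -/
theorem flow_expression_at_sigma_c
    (m N : ℝ) (hm : 1 < m)
    (σc K1 : ℝ)
    (hσc : σc = 2 * (N - 1) * (m - 1) / (3 * m + 1))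
    (hK1 : K1 = (3 * m + 1) * σc - 2 * (m - 1) * (N - 1))
    (F : ℝ → ℝ)
    (hF : ∀ X : ℝ, F X = -(K1 / (2 * (m + 1))) * X
      - ((2 * N - σc - 6) * (2 * N + σc - 2) * (σc + 2) / (16 * m)) * X ^ 3) :
    (∀ X : ℝ, F X = -(4 * (N - 1) * (m * N + 2 * m - N + 2) * (m * (N - 4) + N - 2)
        / (3 * m + 1) ^ 3) * X ^ 3) ∧
    (∀ X : ℝ, 0 < X → (4 ≤ N → F X < 0) ∧ ((N = 2 ∨ N = 3) → 0 < F X)) := by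
  have hm0 : (0:ℝ) < m := by linarith
  have h3m : (0:ℝ) < 3 * m + 1 := by linarith
  have hm1 : (0:ℝ) < m + 1 := by linarith
  have hid : ∀ X : ℝ, F X = -(4 * (N - 1) * (m * N + 2 * m - N + 2) * (m * (N - 4) + N - 2)
      / (3 * m + 1) ^ 3) * X ^ 3 := by
    intro X
    rw [hF, hK1, hσc]
    field_simp
    ring
  refine ⟨hid, fun X hX => ⟨fun hN => ?_, fun hN => ?_⟩⟩
  · rw [hid]
    have hc : 0 < 4 * (N - 1) * (m * N + 2 * m - N + 2) * (m * (N - 4) + N - 2)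
        / (3 * m + 1) ^ 3 := by
      apply div_pos
      · have h1 : 0 < N - 1 := by linarith
        have h2 : 0 < m * N + 2 * m - N + 2 := by nlinarith
        have h3 : 0 < m * (N - 4) + N - 2 := by nlinarith
        positivity
      · positivity
    nlinarith [pow_pos hX 3]
  · rw [hid]
    have hc : 4 * (N - 1) * (m * N + 2 * m - N + 2) * (m * (N - 4) + N - 2)
        / (3 * m + 1) ^ 3 < 0 := by
      rcases hN with h | h <;> subst h <;>
        · apply div_neg_of_neg_of_pos
          · nlinarith
          · positivity
    nlinarith [pow_pos hX 3]
end
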